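/- arXiv:1609.05539 — 2 statements merged into one kernel-verified Lean document; each statement's English description precedes it below -/
import Mathlib

section
/- One-step expected contraction of randomized coordinate descent: let f : ℝ^d → ℝ be differentiable with ∇f L-Lipschitz and f m-strongly convex, 0 < m ≤ L, and let x* be the minimizer of f (so ∇f(x*) = 0). Fix a step size t > 0 and a point y ∈ ℝ^d. If S is uniformly distributed on {1,…,d} and [∇f(y)]_S ∈ ℝ^d denotes the vector whose only nonzero entry is the S-th partial derivative ∂f(y)/∂y_S in position S, then E_S ‖y − t·d·[∇f(y)]_S − x*‖² ≤ C ‖y − x*‖², where C = t²L²d − 2tm + 1. -/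
open scoped RealInnerProductSpace

/-! Writing `v = y - x*` and `g = ∇f(y)`, the average over the coordinate `S` of
`‖v - t d g_S e_S‖²` is exactly `‖v‖² - 2t⟪g, v⟫ + t² d ‖g‖²`. Since `∇f(x*) = 0`, the
Lipschitz bound gives `‖g‖ ≤ L ‖v‖` and strong convexity gives `⟪g, v⟫ ≥ m ‖v‖²`. -/

theorem EuclideanSpace.sum_norm_sub_smul_single_sq {ι : Type*} [Fintype ι] [DecidableEq ι]
    (v g : EuclideanSpace ℝ ι) (c : ℝ) :
    ∑ i, ‖v - c • EuclideanSpace.single i (g i)‖ ^ 2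
      = Fintype.card ι * ‖v‖ ^ 2 - 2 * c * ⟪g, v⟫ + c ^ 2 * ‖g‖ ^ 2 := by
  have hsum : ∑ i, ⟪v, EuclideanSpace.single i (g i)⟫ = ⟪g, v⟫ := by
    simp [PiLp.inner_apply, mul_comm]
  have hnorm : ∑ i, ‖EuclideanSpace.single i (g i)‖ ^ 2 = ‖g‖ ^ 2 := by
    simp [EuclideanSpace.norm_sq_eq]
  simp only [norm_sub_sq_real, inner_smul_right, norm_smul, mul_pow, Real.norm_eq_abs, sq_abs,
    Finset.sum_add_distrib, Finset.sum_sub_distrib, ← Finset.mul_sum, hsum, hnorm,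
    Finset.sum_const, Finset.card_univ, nsmul_eq_mul]
  ring

theorem gradient_eq_zero_of_forall_le {E : Type*} [NormedAddCommGroup E]
    [InnerProductSpace ℝ E] [CompleteSpace E] {f : E → ℝ} {a : E} (h : ∀ z, f a ≤ f z) :
    gradient f a = 0 := by
  rw [gradient, IsLocalMin.fderiv_eq_zero (Filter.Eventually.of_forall h), map_zero]

theorem sq_norm_sub_two_mul_inner_add_le {E : Type*} [NormedAddCommGroup E]
    [InnerProductSpace ℝ E] {g v : E} {L m t d : ℝ} (ht : 0 ≤ t) (hd : 0 ≤ d) (hg : ‖g‖ ≤ L * ‖v‖)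
    (hgv : m * ‖v‖ ^ 2 ≤ ⟪g, v⟫) :
    ‖v‖ ^ 2 - 2 * t * ⟪g, v⟫ + t ^ 2 * d * ‖g‖ ^ 2
      ≤ (t ^ 2 * L ^ 2 * d - 2 * t * m + 1) * ‖v‖ ^ 2 := by
  have hg2 : ‖g‖ ^ 2 ≤ L ^ 2 * ‖v‖ ^ 2 := by
    rw [← mul_pow]; exact pow_le_pow_left₀ (norm_nonneg g) hg 2
  linarith [mul_le_mul_of_nonneg_left hg2 (by positivity : 0 ≤ t ^ 2 * d),
    mul_le_mul_of_nonneg_left hgv (by positivity : 0 ≤ 2 * t)]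

theorem rcd_one_step_contraction_general (d : ℕ) (hd : 1 ≤ d) (L m t : ℝ)
    (ht : 0 < t)
    (f : EuclideanSpace ℝ (Fin d) → ℝ)
    (hLip : ∀ x y : EuclideanSpace ℝ (Fin d),
      ‖gradient f x - gradient f y‖ ≤ L * ‖x - y‖)
    (hsc : ∀ x y : EuclideanSpace ℝ (Fin d),
      m * ‖x - y‖ ^ 2 ≤ ⟪gradient f x - gradient f y, x - y⟫)
    (xstar : EuclideanSpace ℝ (Fin d)) (hmin : ∀ z, f xstar ≤ f z)
    (y : EuclideanSpace ℝ (Fin d)) :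
    (1 / d : ℝ) * ∑ i : Fin d,
        ‖y - (t * d) • EuclideanSpace.single i (gradient f y i) - xstar‖ ^ 2
      ≤ (t ^ 2 * L ^ 2 * d - 2 * t * m + 1) * ‖y - xstar‖ ^ 2 := by
  have hgrad : gradient f xstar = 0 := gradient_eq_zero_of_forall_le hmin
  have hd0 : (d : ℝ) ≠ 0 := Nat.cast_ne_zero.mpr (by omega)
  have hmean : (1 / d : ℝ) * ∑ i : Fin d,
        ‖y - (t * d) • EuclideanSpace.single i (gradient f y i) - xstar‖ ^ 2
      = ‖y - xstar‖ ^ 2 - 2 * t * ⟪gradient f y, y - xstar⟫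
        + t ^ 2 * d * ‖gradient f y‖ ^ 2 := by
    simp only [sub_right_comm y, EuclideanSpace.sum_norm_sub_smul_single_sq, Fintype.card_fin]
    field_simp
  rw [hmean]
  apply sq_norm_sub_two_mul_inner_add_le ht.le d.cast_nonneg
  · simpa [hgrad] using hLip y xstar
  · simpa [hgrad] using hsc y xstar

/-- One-step expected contraction of randomized coordinate descent: for `f` with
`L`-Lipschitz gradient and `m`-strongly convex, minimizer `x*`, step size `t > 0`,
and `S` uniform on the `d` coordinates,
`E_S ‖y − t·d·[∇f(y)]_S − x*‖² ≤ (t²L²d − 2tm + 1)·‖y − x*‖²`. -/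
theorem rcd_one_step_contraction (d : ℕ) (hd : 1 ≤ d) (L m t : ℝ)
    (hm : 0 < m) (hmL : m ≤ L) (ht : 0 < t)
    (f : EuclideanSpace ℝ (Fin d) → ℝ) (hf : Differentiable ℝ f)
    (hLip : ∀ x y : EuclideanSpace ℝ (Fin d),
      ‖gradient f x - gradient f y‖ ≤ L * ‖x - y‖)
    (hsc : ∀ x y : EuclideanSpace ℝ (Fin d),
      m * ‖x - y‖ ^ 2 ≤ ⟪gradient f x - gradient f y, x - y⟫)
    (xstar : EuclideanSpace ℝ (Fin d)) (hmin : ∀ z, f xstar ≤ f z)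
    (y : EuclideanSpace ℝ (Fin d)) :
    (1 / d : ℝ) * ∑ i : Fin d,
        ‖y - (t * d) • EuclideanSpace.single i (gradient f y i) - xstar‖ ^ 2
      ≤ (t ^ 2 * L ^ 2 * d - 2 * t * m + 1) * ‖y - xstar‖ ^ 2 :=
  rcd_one_step_contraction_general d hd L m t ht f hLip hsc xstar hmin y
end

section
/- Expected squared error after k steps of unquantized randomized coordinate descent contracts geometrically: under the setting of randomized coordinate descent with step size t > 0 such that C = t²L²d − 2tm + 1 < 1, started at x_0 with i.i.d. uniform coordinate choices S_1, S_2, …, and updates x_{j+1} = x_j − t·d·[∇f(x_j)]_{S_{j+1}}, one has E‖x_k − x*‖² ≤ C^k ‖x_0 − x*‖² for all k ≥ 0. -/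
open scoped RealInnerProductSpace

/-!
Write `y = x - x*` and `g = ∇f x = ∇f x - ∇f x*`. Averaged over the coordinate `i`, the update
`y ↦ y - t d g_i e_i` has second moment exactly `‖y‖² - 2t⟪y, g⟫ + t²d‖g‖²`, which strong
convexity and the Lipschitz bound on the gradient turn into `C‖y‖²`, `C = t²L²d - 2tm + 1`.
Since the coordinates are i.i.d., summing over the last one first contracts the expectation by
`C` at every step.
-/

noncomputable def rcdIter {d : ℕ} (f : EuclideanSpace ℝ (Fin d) → ℝ) (t : ℝ)
    (x0 : EuclideanSpace ℝ (Fin d)) (s : ℕ → Fin d) : ℕ → EuclideanSpace ℝ (Fin d)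
  | 0 => x0
  | j + 1 => rcdIter f t x0 s j -
      (t * d) • EuclideanSpace.single (s j) (gradient f (rcdIter f t x0 s j) (s j))

theorem IsLocalMin.gradient_eq_zero {F : Type*} [NormedAddCommGroup F] [InnerProductSpace ℝ F]
    [CompleteSpace F] {f : F → ℝ} {a : F} (h : IsLocalMin f a) : gradient f a = 0 := by
  rw [gradient, h.fderiv_eq_zero, map_zero]

theorem Fintype.sum_fin_succ_pi_eq_sum_sum_snoc {α M : Type*} [Fintype α] [AddCommMonoid M]
    {k : ℕ} (F : (Fin (k + 1) → α) → M) :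
    ∑ s, F s = ∑ s : Fin k → α, ∑ a, F (Fin.snoc s a) := by
  rw [← (Fin.snocEquiv fun _ => α).sum_comp, Fintype.sum_prod_type, Finset.sum_comm]
  rfl

def padSeq {α : Type*} {k : ℕ} (a : α) (s : Fin k → α) : ℕ → α :=
  fun j => if h : j < k then s ⟨j, h⟩ else a

section padSeq

variable {α : Type*} {k : ℕ} (a b : α) (s : Fin k → α)

theorem padSeq_snoc_of_lt {j : ℕ} (hj : j < k) :
    padSeq a (Fin.snoc s b : Fin (k + 1) → α) j = padSeq a s j := by
  simp only [padSeq, dif_pos hj, dif_pos (Nat.lt_succ_of_lt hj)]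
  exact Fin.snoc_castSucc (α := fun _ => α) b s ⟨j, hj⟩

theorem padSeq_snoc_self : padSeq a (Fin.snoc s b : Fin (k + 1) → α) k = b := by
  simp only [padSeq, dif_pos (Nat.lt_succ_self k)]
  exact Fin.snoc_last (α := fun _ => α) ..

end padSeq

namespace EuclideanSpace

variable {ι : Type*} [Fintype ι] [DecidableEq ι]

theorem sum_norm_sub_smul_single_sq_s8 (y g : EuclideanSpace ℝ ι) (c : ℝ) :
    ∑ i, ‖y - c • single i (g i)‖ ^ 2
      = Fintype.card ι * ‖y‖ ^ 2 - 2 * c * ⟪y, g⟫ + c ^ 2 * ‖g‖ ^ 2 := by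
  have hterm : ∀ i, ‖y - c • single i (g i)‖ ^ 2
      = ‖y‖ ^ 2 - 2 * c * (y i * g i) + c ^ 2 * g i ^ 2 := by
    intro i
    rw [norm_sub_sq_real, real_inner_smul_right, inner_single_right, norm_smul, PiLp.norm_single,
      mul_pow, Real.norm_eq_abs, Real.norm_eq_abs, sq_abs, sq_abs]
    simp only [conj_trivial]
    ring
  have hinner : ⟪y, g⟫ = ∑ i, y i * g i := by
    simp only [PiLp.inner_apply, RCLike.inner_apply, conj_trivial]
    exact Finset.sum_congr rfl fun i _ => mul_comm _ _
  simp only [hterm, Finset.sum_add_distrib, Finset.sum_sub_distrib, ← Finset.mul_sum,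
    Finset.sum_const, Finset.card_univ, nsmul_eq_mul, hinner, real_norm_sq_eq g]

theorem sum_norm_sub_smul_single_sq_le {y g : EuclideanSpace ℝ ι} {c m L : ℝ} (hc : 0 ≤ c)
    (hsc : m * ‖y‖ ^ 2 ≤ ⟪g, y⟫) (hLip : ‖g‖ ≤ L * ‖y‖) :
    ∑ i, ‖y - c • single i (g i)‖ ^ 2
      ≤ (Fintype.card ι - 2 * c * m + c ^ 2 * L ^ 2) * ‖y‖ ^ 2 := by
  have hg : ‖g‖ ^ 2 ≤ L ^ 2 * ‖y‖ ^ 2 := by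
    rw [← mul_pow]
    exact pow_le_pow_left₀ (norm_nonneg g) hLip 2
  rw [sum_norm_sub_smul_single_sq_s8, real_inner_comm]
  nlinarith [mul_le_mul_of_nonneg_left hsc (by positivity : 0 ≤ 2 * c),
    mul_le_mul_of_nonneg_left hg (sq_nonneg c)]

end EuclideanSpace

noncomputable def rcdStep {d : ℕ} (f : EuclideanSpace ℝ (Fin d) → ℝ) (t : ℝ) (i : Fin d)
    (x : EuclideanSpace ℝ (Fin d)) : EuclideanSpace ℝ (Fin d) :=
  x - (t * d) • EuclideanSpace.single i (gradient f x i)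

section rcdIter

variable {d : ℕ} (f : EuclideanSpace ℝ (Fin d) → ℝ) (t : ℝ) (x0 : EuclideanSpace ℝ (Fin d))

theorem rcdIter_zero (s : ℕ → Fin d) : rcdIter f t x0 s 0 = x0 := rfl

theorem rcdIter_succ (s : ℕ → Fin d) (k : ℕ) :
    rcdIter f t x0 s (k + 1) = rcdStep f t (s k) (rcdIter f t x0 s k) := rfl

theorem rcdIter_congr {s s' : ℕ → Fin d} {k : ℕ} (h : ∀ j < k, s j = s' j) :
    rcdIter f t x0 s k = rcdIter f t x0 s' k := by
  induction k with
  | zero => rfl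
  | succ k ih =>
    rw [rcdIter_succ, rcdIter_succ, ih fun j hj => h j (Nat.lt_succ_of_lt hj),
      h k (Nat.lt_succ_self k)]

theorem rcdIter_padSeq_snoc (a : Fin d) {k : ℕ} (s : Fin k → Fin d) (i : Fin d) :
    rcdIter f t x0 (padSeq a (Fin.snoc s i : Fin (k + 1) → Fin d)) (k + 1)
      = rcdStep f t i (rcdIter f t x0 (padSeq a s) k) := by
  rw [rcdIter_succ, padSeq_snoc_self,
    rcdIter_congr f t x0 fun j hj => padSeq_snoc_of_lt a i s hj]

variable {f t}

theorem sum_norm_rcdStep_sub_sq_le {L m : ℝ} (ht : 0 ≤ t)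
    (hLip : ∀ x y : EuclideanSpace ℝ (Fin d), ‖gradient f x - gradient f y‖ ≤ L * ‖x - y‖)
    (hsc : ∀ x y : EuclideanSpace ℝ (Fin d),
      m * ‖x - y‖ ^ 2 ≤ ⟪gradient f x - gradient f y, x - y⟫)
    {xstar : EuclideanSpace ℝ (Fin d)} (hxstar : gradient f xstar = 0)
    (x : EuclideanSpace ℝ (Fin d)) :
    ∑ i, ‖rcdStep f t i x - xstar‖ ^ 2
      ≤ d * (t ^ 2 * L ^ 2 * d - 2 * t * m + 1) * ‖x - xstar‖ ^ 2 := by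
  have hstep : ∀ i, rcdStep f t i x - xstar
      = (x - xstar) - (t * d) • EuclideanSpace.single i (gradient f x i) := fun i => by
    rw [rcdStep, sub_right_comm]
  have h := EuclideanSpace.sum_norm_sub_smul_single_sq_le (by positivity : 0 ≤ t * d)
    (by simpa only [hxstar, sub_zero] using hsc x xstar)
    (by simpa only [hxstar, sub_zero] using hLip x xstar)
  simp only [hstep, Fintype.card_fin] at h ⊢
  convert h using 2
  ring

theorem sum_norm_rcdIter_padSeq_sub_sq_le {xstar : EuclideanSpace ℝ (Fin d)} {K : ℝ}
    (hK : 0 ≤ K) (hstep : ∀ x, ∑ i, ‖rcdStep f t i x - xstar‖ ^ 2 ≤ K * ‖x - xstar‖ ^ 2)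
    (a : Fin d) (k : ℕ) :
    ∑ s : Fin k → Fin d, ‖rcdIter f t x0 (padSeq a s) k - xstar‖ ^ 2
      ≤ K ^ k * ‖x0 - xstar‖ ^ 2 := by
  induction k with
  | zero => simp [rcdIter_zero]
  | succ k ih =>
    calc ∑ s : Fin (k + 1) → Fin d, ‖rcdIter f t x0 (padSeq a s) (k + 1) - xstar‖ ^ 2
        = ∑ s : Fin k → Fin d, ∑ i,
            ‖rcdStep f t i (rcdIter f t x0 (padSeq a s) k) - xstar‖ ^ 2 := by
          simp only [Fintype.sum_fin_succ_pi_eq_sum_sum_snoc, rcdIter_padSeq_snoc]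
      _ ≤ ∑ s : Fin k → Fin d, K * ‖rcdIter f t x0 (padSeq a s) k - xstar‖ ^ 2 :=
          Finset.sum_le_sum fun s _ => hstep _
      _ ≤ K ^ (k + 1) * ‖x0 - xstar‖ ^ 2 := by
          rw [← Finset.mul_sum, pow_succ', mul_assoc]
          exact mul_le_mul_of_nonneg_left ih hK

end rcdIter

theorem rcd_geometric_contraction_general (d : ℕ) (hd : 1 ≤ d) (L m t : ℝ)
    (hm : 0 < m) (hmL : m ≤ L) (ht : 0 < t)
    (f : EuclideanSpace ℝ (Fin d) → ℝ)
    (hLip : ∀ x y : EuclideanSpace ℝ (Fin d),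
      ‖gradient f x - gradient f y‖ ≤ L * ‖x - y‖)
    (hsc : ∀ x y : EuclideanSpace ℝ (Fin d),
      m * ‖x - y‖ ^ 2 ≤ ⟪gradient f x - gradient f y, x - y⟫)
    (xstar : EuclideanSpace ℝ (Fin d)) (hmin : ∀ z, f xstar ≤ f z)
    (x0 : EuclideanSpace ℝ (Fin d)) (k : ℕ) :
    (1 / (d : ℝ) ^ k) * ∑ s : Fin k → Fin d,
        ‖rcdIter f t x0 (fun j => if h : j < k then s ⟨j, h⟩ else ⟨0, hd⟩) k - xstar‖ ^ 2
      ≤ (t ^ 2 * L ^ 2 * d - 2 * t * m + 1) ^ k * ‖x0 - xstar‖ ^ 2 := by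
  have hd1 : (1 : ℝ) ≤ d := by exact_mod_cast hd
  have hmL2 : m ^ 2 ≤ L ^ 2 * d :=
    (pow_le_pow_left₀ hm.le hmL 2).trans (le_mul_of_one_le_right (sq_nonneg L) hd1)
  -- `C ≥ t²m² - 2tm + 1 = (tm - 1)²`
  have hC : 0 ≤ t ^ 2 * L ^ 2 * d - 2 * t * m + 1 := by
    nlinarith [sq_nonneg (t * m - 1), mul_le_mul_of_nonneg_left hmL2 (sq_nonneg t)]
  have hxstar : gradient f xstar = 0 := IsLocalMin.gradient_eq_zero (.of_forall hmin)
  have h := sum_norm_rcdIter_padSeq_sub_sq_le x0 (by positivity)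
    (sum_norm_rcdStep_sub_sq_le ht.le hLip hsc hxstar) ⟨0, hd⟩ k
  rw [one_div_mul_eq_div, div_le_iff₀ (by positivity)]
  exact h.trans_eq (by rw [mul_pow]; ring)

/-- The expected squared error of unquantized randomized coordinate descent contracts
geometrically: if `C = t²L²d − 2tm + 1 < 1` then `E‖x_k − x*‖² ≤ C^k·‖x₀ − x*‖²` for
all `k ≥ 0`, the expectation being over the i.i.d. uniform coordinate indices. -/
theorem rcd_geometric_contraction (d : ℕ) (hd : 1 ≤ d) (L m t : ℝ)
    (hm : 0 < m) (hmL : m ≤ L) (ht : 0 < t)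
    (hC : t ^ 2 * L ^ 2 * d - 2 * t * m + 1 < 1)
    (f : EuclideanSpace ℝ (Fin d) → ℝ) (hf : Differentiable ℝ f)
    (hLip : ∀ x y : EuclideanSpace ℝ (Fin d),
      ‖gradient f x - gradient f y‖ ≤ L * ‖x - y‖)
    (hsc : ∀ x y : EuclideanSpace ℝ (Fin d),
      m * ‖x - y‖ ^ 2 ≤ ⟪gradient f x - gradient f y, x - y⟫)
    (xstar : EuclideanSpace ℝ (Fin d)) (hmin : ∀ z, f xstar ≤ f z)
    (x0 : EuclideanSpace ℝ (Fin d)) (k : ℕ) :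
    (1 / (d : ℝ) ^ k) * ∑ s : Fin k → Fin d,
        ‖rcdIter f t x0 (fun j => if h : j < k then s ⟨j, h⟩ else ⟨0, hd⟩) k - xstar‖ ^ 2
      ≤ (t ^ 2 * L ^ 2 * d - 2 * t * m + 1) ^ k * ‖x0 - xstar‖ ^ 2 :=
  rcd_geometric_contraction_general d hd L m t hm hmL ht f hLip hsc xstar hmin x0 k
end
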